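/- arXiv:1707.07803 — 2 statements merged into one kernel-verified Lean document; each statement's English description precedes it below -/
import Mathlib

section
/- Let Q be a matrix with rows indexed by tuples (i₁,…,i_d), i_k ∈ {1,…,I_k}, and columns indexed by κ ∈ {1,…,K}, given in MPO form by tensors 𝒬^(1) ∈ ℝ^{1×I₁×K×R₂} and 𝒬^(k) ∈ ℝ^{R_k×I_k×1×R_{k+1}} for k = 2,…,d with R_{d+1} = 1, i.e. Q((i₁,…,i_d),κ) = Σ_{r₂,…,r_d} 𝒬^(1)(1,i₁,κ,r₂)·𝒬^(2)(r₂,i₂,1,r₃)⋯𝒬^(d)(r_d,i_d,1,1). Suppose that for every k = 2,…,d the R_k × (I_k·R_{k+1}) matrix G_k obtained by reshaping 𝒬^(k) (with rows indexed by r_k and columns by pairs (i_k,r_{k+1})) satisfies G_k·G_kᵀ = I_{R_k}. Then QᵀQ = Q₁ᵀQ₁, where Q₁ is the (I₁·R₂) × K matrix obtained by reshaping 𝒬^(1) (rows indexed by pairs (i₁,r₂), columns by κ). In particular, if Q₁ has orthonormal columns, i.e. Q₁ᵀQ₁ = I_K, then QᵀQ = I_K, so Q has orthonormal columns. -/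
/-!
Write `Q e_κ` as the tensor train with cores `𝒬^(2), …, 𝒬^(d)` and left boundary vector
`𝒬^(1)(i₁, κ, ·)`. Right-orthonormality of a core says that contracting it with itself over its
physical and right bond indices gives the identity on its left bond. So in `⟨Q e_κ, Q e_μ⟩`,
summing over `i_d, …, i₂` collapses the cores one at a time from the right, and what is left
is `∑ i₁, ∑ r, 𝒬^(1)(i₁, κ, r) 𝒬^(1)(i₁, μ, r) = (Q₁ᵀ Q₁)(κ, μ)`.
-/

open Matrix BigOperators

theorem Fin.sum_pi_eq_sum_sum_snoc {M : Type*} [AddCommMonoid M] {d : ℕ}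
    {α : Fin (d + 1) → Type*} [∀ k, Fintype (α k)] (f : (∀ k, α k) → M) :
    ∑ x, f x = ∑ x : ∀ k : Fin d, α k.castSucc, ∑ y : α (Fin.last d), f (Fin.snoc x y) := by
  rw [← (Fin.snocEquiv α).sum_comp, Fintype.sum_prod_type_right]
  rfl

namespace TensorTrain

variable {d : ℕ} {n : Fin d → ℕ} {R : Fin (d + 1) → ℕ}

def coreMatrix (T : (k : Fin d) → Fin (R k.castSucc) → Fin (n k) → Fin (R k.succ) → ℝ)
    (k : Fin d) : Matrix (Fin (R k.castSucc)) (Fin (n k) × Fin (R k.succ)) ℝ :=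
  Matrix.of fun r p => T k r p.1 p.2

def coreProduct (T : (k : Fin d) → Fin (R k.castSucc) → Fin (n k) → Fin (R k.succ) → ℝ)
    (i : (k : Fin d) → Fin (n k)) (r : (k : Fin (d + 1)) → Fin (R k)) : ℝ :=
  ∏ k, T k (r k.castSucc) (i k) (r k.succ)

def eval (T : (k : Fin d) → Fin (R k.castSucc) → Fin (n k) → Fin (R k.succ) → ℝ)
    (u : Fin (R 0) → ℝ) (i : (k : Fin d) → Fin (n k)) : ℝ :=
  ∑ r, u (r 0) * coreProduct T i r

theorem coreProduct_snoc {n : Fin (d + 1) → ℕ} {R : Fin (d + 2) → ℕ}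
    (T : (k : Fin (d + 1)) → Fin (R k.castSucc) → Fin (n k) → Fin (R k.succ) → ℝ)
    (i : (k : Fin d) → Fin (n k.castSucc)) (j : Fin (n (Fin.last d)))
    (r : (k : Fin (d + 1)) → Fin (R k.castSucc)) (z : Fin (R (Fin.last (d + 1)))) :
    coreProduct T (Fin.snoc i j) (Fin.snoc r z) =
      coreProduct (fun k => T k.castSucc) i r * T (Fin.last d) (r (Fin.last d)) j z := by
  simp only [coreProduct, Fin.prod_univ_castSucc, Fin.snoc_castSucc, Fin.succ_last,
    Fin.snoc_last]
  congr 1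
  refine Finset.prod_congr rfl fun k _ => ?_
  exact congrArg _ (Fin.snoc_castSucc (α := fun k => Fin (R k)) _ _ k.succ)

theorem sum_sum_mul_of_coreMatrix_mul_transpose_eq_one
    {T : (k : Fin d) → Fin (R k.castSucc) → Fin (n k) → Fin (R k.succ) → ℝ} {k : Fin d}
    (hT : coreMatrix T k * (coreMatrix T k)ᵀ = 1) (a b : Fin (R k.castSucc)) :
    ∑ j, ∑ z, T k a j z * T k b j z = if a = b then 1 else 0 := by
  simpa [mul_apply, one_apply, coreMatrix, Fintype.sum_prod_type] using congrFun₂ hT a b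

/- The last bond is kept open, so that contracting the last core (by right-orthonormality)
turns the condition `r (last d) = s (last d)` into the same condition one bond to the left. -/
theorem sum_ite_mul_coreProduct_mul_coreProduct_eq_trace :
    ∀ {d : ℕ} {n : Fin d → ℕ} {R : Fin (d + 1) → ℕ}
      (T : (k : Fin d) → Fin (R k.castSucc) → Fin (n k) → Fin (R k.succ) → ℝ),
      (∀ k, coreMatrix T k * (coreMatrix T k)ᵀ = 1) → ∀ F : Matrix (Fin (R 0)) (Fin (R 0)) ℝ,
      ∑ i, ∑ r, ∑ s, (if r (Fin.last d) = s (Fin.last d) then F (r 0) (s 0) else 0) *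
        (coreProduct T i r * coreProduct T i s) = F.trace
  | 0, n, R, T, _, F => by
    simp only [coreProduct, Finset.univ_eq_empty, Finset.prod_empty, mul_one,
      Fintype.sum_unique]
    let e := Equiv.piUnique fun k : Fin 1 => Fin (R k)
    change ∑ r, ∑ s, (if e r = e s then F (e r) (e s) else 0) = _
    simp only [Fin.default_eq_zero, EmbeddingLike.apply_eq_iff_eq, Finset.sum_ite_eq,
      Finset.mem_univ, if_true]
    exact e.sum_comp fun a => F a a
  | d + 1, n, R, T, hT, F => by
    have hcore : ∀ (a b : Fin (R (Fin.last d).castSucc)) (x : ℝ), (if a = b then x else 0) =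
        x * ∑ j, ∑ z, T (Fin.last d) a j z * T (Fin.last d) b j z := by
      intro a b x
      rw [sum_sum_mul_of_coreMatrix_mul_transpose_eq_one (hT (Fin.last d)), mul_ite, mul_one,
        mul_zero]
    refine Eq.trans ?_ (sum_ite_mul_coreProduct_mul_coreProduct_eq_trace
      (R := fun k => R k.castSucc) (fun k => T k.castSucc) (fun k => hT k.castSucc) F)
    simp only [Fin.sum_pi_eq_sum_sum_snoc (α := fun k => Fin (n k)),
      Fin.sum_pi_eq_sum_sum_snoc (α := fun k => Fin (R k)), coreProduct_snoc, Fin.snoc_last,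
      Fin.snoc_apply_zero, ite_mul, zero_mul, Finset.sum_ite_eq, Finset.mem_univ, if_true, hcore,
      Finset.mul_sum, Finset.sum_mul]
    refine Finset.sum_congr rfl fun i _ => ?_
    rw [Finset.sum_comm]
    refine Finset.sum_congr rfl fun r _ => ?_
    conv_lhs => enter [2, j]; rw [Finset.sum_comm]
    rw [Finset.sum_comm]
    refine Finset.sum_congr rfl fun s _ => Finset.sum_congr rfl fun j _ =>
      Finset.sum_congr rfl fun z _ => ?_
    ring

theorem eval_dotProduct_eval (hR : R (Fin.last d) = 1)
    {T : (k : Fin d) → Fin (R k.castSucc) → Fin (n k) → Fin (R k.succ) → ℝ}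
    (hT : ∀ k, coreMatrix T k * (coreMatrix T k)ᵀ = 1) (u v : Fin (R 0) → ℝ) :
    eval T u ⬝ᵥ eval T v = u ⬝ᵥ v := by
  have : Subsingleton (Fin (R (Fin.last d))) := by rw [hR]; infer_instance
  refine Eq.trans ?_
    (sum_ite_mul_coreProduct_mul_coreProduct_eq_trace T hT (Matrix.of fun a b => u a * v b))
  refine Finset.sum_congr rfl fun i _ => ?_
  simp only [eval, Finset.sum_mul_sum, if_pos (Subsingleton.elim _ _), of_apply]
  refine Finset.sum_congr rfl fun r _ => Finset.sum_congr rfl fun s _ => ?_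
  ring

end TensorTrain

-- Here `d` is the paper's `d - 1`, and `Idim k`, `R k`, `T k` are its `I_{k+2}`, `R_{k+2}`,
-- `𝒬^(k+2)`.
/-- Orthogonality of a right-orthogonalized MPO: let `Q ∈ ℝ^{(I₁⋯I_d)×K}` be given in
MPO form with first tensor `Q1t` (of size `1×I₁×K×R₂`, here `R 0 = R₂`) and remaining
tensors `T k` (of size `R_k×I_k×1×R_{k+1}`, with `R_{d+1}=1`).  If each reshaped tensor
`G_k ∈ ℝ^{R_k×(I_k·R_{k+1})}` satisfies `G_k·G_kᵀ = I`, then `QᵀQ = Q₁ᵀQ₁` where `Q₁` is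
the `(I₁·R₂)×K` reshaping of the first tensor; in particular, if `Q₁` has orthonormal
columns then so does `Q`. -/
theorem mpo_qr_orthogonality {d I₁ K : ℕ} (Idim : Fin d → ℕ)
    (R : Fin (d + 1) → ℕ) (hRlast : R (Fin.last d) = 1)
    (Q1t : Fin I₁ → Fin K → Fin (R 0) → ℝ)
    (T : (k : Fin d) → Fin (R k.castSucc) → Fin (Idim k) → Fin (R k.succ) → ℝ)
    (Q : Matrix (Fin I₁ × ((k : Fin d) → Fin (Idim k))) (Fin K) ℝ)
    (hQ : ∀ i κ, Q i κ = ∑ r : (k : Fin (d + 1)) → Fin (R k),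
        Q1t i.1 κ (r 0) * ∏ k : Fin d, T k (r k.castSucc) (i.2 k) (r k.succ))
    (hG : ∀ k : Fin d,
      (Matrix.of fun (r : Fin (R k.castSucc)) (p : Fin (Idim k) × Fin (R k.succ)) =>
          T k r p.1 p.2) *
      (Matrix.of fun (r : Fin (R k.castSucc)) (p : Fin (Idim k) × Fin (R k.succ)) =>
          T k r p.1 p.2)ᵀ = 1) :
    Qᵀ * Q =
      (Matrix.of fun (p : Fin I₁ × Fin (R 0)) (κ : Fin K) => Q1t p.1 κ p.2)ᵀ *
      (Matrix.of fun (p : Fin I₁ × Fin (R 0)) (κ : Fin K) => Q1t p.1 κ p.2) ∧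
    ((Matrix.of fun (p : Fin I₁ × Fin (R 0)) (κ : Fin K) => Q1t p.1 κ p.2)ᵀ *
      (Matrix.of fun (p : Fin I₁ × Fin (R 0)) (κ : Fin K) => Q1t p.1 κ p.2) = 1 →
      Qᵀ * Q = 1) := by
  have hQ_eval : ∀ i₁ i κ, Q (i₁, i) κ = TensorTrain.eval T (Q1t i₁ κ) i :=
    fun i₁ i κ => hQ (i₁, i) κ
  have hgram : Qᵀ * Q =
      (Matrix.of fun (p : Fin I₁ × Fin (R 0)) (κ : Fin K) => Q1t p.1 κ p.2)ᵀ *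
      (Matrix.of fun (p : Fin I₁ × Fin (R 0)) (κ : Fin K) => Q1t p.1 κ p.2) := by
    ext κ μ
    simp only [mul_apply, transpose_apply, of_apply, Fintype.sum_prod_type, hQ_eval]
    exact Finset.sum_congr rfl fun i₁ _ => TensorTrain.eval_dotProduct_eval hRlast hG _ _
  exact ⟨hgram, fun h => hgram.trans h⟩
end

section
/- Let B be a matrix with rows indexed by κ ∈ {1,…,K} and columns indexed by tuples (j₁,…,j_d), j_k ∈ {1,…,J_k}, given in MPO form by tensors ℬ^(1) ∈ ℝ^{1×K×J₁×R₂} and ℬ^(k) ∈ ℝ^{R_k×1×J_k×R_{k+1}} for k = 2,…,d with R_{d+1} = 1, i.e. B(κ,(j₁,…,j_d)) = Σ_{r₂,…,r_d} ℬ^(1)(1,κ,j₁,r₂)·ℬ^(2)(r₂,1,j₂,r₃)⋯ℬ^(d)(r_d,1,j_d,1). Suppose that for every k = 2,…,d the R_k × (J_k·R_{k+1}) matrix G_k obtained by reshaping ℬ^(k) (rows indexed by r_k, columns by pairs (j_k,r_{k+1})) satisfies G_k·G_kᵀ = I_{R_k}. Then B·Bᵀ = B₁·B₁ᵀ, where B₁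 is the K × (J₁·R₂) matrix obtained by reshaping ℬ^(1) (rows indexed by κ, columns by pairs (j₁,r₂)). Consequently, an economical SVD of B is obtained from the SVD of the small matrix B₁. -/
open Matrix BigOperators

lemma sum_pi_succ {n : ℕ} (β : Fin (n+1) → Type*) [∀ i, Fintype (β i)]
    (f : ((i : Fin (n+1)) → β i) → ℝ) :
    ∑ x : (i : Fin (n+1)) → β i, f x
      = ∑ a : β 0, ∑ t : (i : Fin n) → β i.succ, f (Fin.cons a t) := by
  rw [← (Fin.consEquiv β).sum_comp, Fintype.sum_prod_type]
  rfl

lemma shuffle {α β γ δ ε ζ : Type*} [Fintype α] [Fintype β] [Fintype γ] [Fintype δ]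
    [Fintype ε] [Fintype ζ]
    (A : α → γ → ℝ) (P : β → γ → δ → ℝ) (Bb : α → ε → ℝ) (Q : β → ε → ζ → ℝ) :
    (∑ j0 : α, ∑ jt : β, ∑ r1 : γ, ∑ tt : δ, ∑ r1' : ε, ∑ tt' : ζ,
      (A j0 r1 * P jt r1 tt) * (Bb j0 r1' * Q jt r1' tt'))
    = ∑ j0 : α, ∑ r1 : γ, ∑ r1' : ε, (A j0 r1 * Bb j0 r1') *
        (∑ jt : β, ∑ tt : δ, ∑ tt' : ζ, P jt r1 tt * Q jt r1' tt') := by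
  refine Finset.sum_congr rfl fun j0 _ => ?_
  rw [Finset.sum_comm]
  refine Finset.sum_congr rfl fun r1 _ => ?_
  conv_lhs => enter [2, jt]; rw [Finset.sum_comm]
  rw [Finset.sum_comm]
  refine Finset.sum_congr rfl fun r1' _ => ?_
  simp only [Finset.mul_sum]
  exact Finset.sum_congr rfl fun _ _ => Finset.sum_congr rfl fun _ _ =>
    Finset.sum_congr rfl fun _ _ => by ring

lemma mpo_key : ∀ (d : ℕ) (Jdim : Fin d → ℕ) (R : Fin (d+1) → ℕ),
    R (Fin.last d) = 1 →
    ∀ (T : (k : Fin d) → Fin (R k.castSucc) → Fin (Jdim k) → Fin (R k.succ) → ℝ),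
    (∀ (k : Fin d) (r r' : Fin (R k.castSucc)),
      (∑ j : Fin (Jdim k), ∑ s : Fin (R k.succ), T k r j s * T k r' j s)
        = if r = r' then 1 else 0) →
    ∀ a b : Fin (R 0),
    (∑ j : (k : Fin d) → Fin (Jdim k), ∑ t : (k : Fin d) → Fin (R k.succ),
      ∑ t' : (k : Fin d) → Fin (R k.succ),
        (∏ k, T k (Fin.cons (α := fun k => Fin (R k)) a t k.castSucc) (j k) (t k)) *
        (∏ k, T k (Fin.cons (α := fun k => Fin (R k)) b t' k.castSucc) (j k) (t' k)))
      = if a = b then 1 else 0 := by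
  intro d
  induction d with
  | zero =>
    intro Jdim R hR T hG a b
    have hab : a = b := by
      have h1 : R 0 = 1 := hR
      have := a.isLt; have := b.isLt
      exact Fin.ext (by omega)
    subst hab
    simp
  | succ d ih =>
    intro Jdim R hR T hG a b
    rw [sum_pi_succ (fun k : Fin (d+1) => Fin (Jdim k))]
    conv_lhs =>
      enter [2, j0, 2, jt]
      rw [sum_pi_succ (fun k : Fin (d+1) => Fin (R k.succ))]
      enter [2, r1, 2, tt]
      rw [sum_pi_succ (fun k : Fin (d+1) => Fin (R k.succ))]
    simp only [Fin.prod_univ_succ, Fin.cons_zero, Fin.cons_succ, Fin.castSucc_zero,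
      ← Fin.succ_castSucc]
    rw [shuffle (fun (j0 : Fin (Jdim 0)) (r1 : Fin (R (Fin.succ 0))) => T 0 a j0 r1)
        (fun (jt : (i : Fin d) → Fin (Jdim i.succ)) (r1 : Fin (R (Fin.succ 0)))
            (tt : (i : Fin d) → Fin (R i.succ.succ)) => ∏ k : Fin d, T k.succ
          (Fin.cons (α := fun k : Fin (d+1) => Fin (R k.succ)) r1 tt k.castSucc)
          (jt k) (tt k))
        (fun (j0 : Fin (Jdim 0)) (r1' : Fin (R (Fin.succ 0))) => T 0 b j0 r1')
        (fun (jt : (i : Fin d) → Fin (Jdim i.succ)) (r1' : Fin (R (Fin.succ 0)))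
            (tt' : (i : Fin d) → Fin (R i.succ.succ)) => ∏ k : Fin d, T k.succ
          (Fin.cons (α := fun k : Fin (d+1) => Fin (R k.succ)) r1' tt' k.castSucc)
          (jt k) (tt' k))]
    have inner := ih (fun k => Jdim k.succ) (fun k => R k.succ) hR (fun k => T k.succ)
      (fun k => hG k.succ)
    beta_reduce at inner
    conv_lhs =>
      enter [2, j0, 2, r1, 2, r1']
      rw [inner r1 r1']
    simp only [mul_ite, mul_one, mul_zero, Finset.sum_ite_eq, Finset.sum_ite_eq',
      Finset.mem_univ, if_true]
    exact hG 0 a b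

lemma shuffle2 {α β γ δ ε ζ : Type*} [Fintype α] [Fintype β] [Fintype γ] [Fintype δ]
    [Fintype ε] [Fintype ζ]
    (A : α → γ → ℝ) (P : β → γ → δ → ℝ) (Bb : α → ε → ℝ) (Q : β → ε → ζ → ℝ) :
    (∑ j1 : α, ∑ j2 : β, ∑ a : γ, ∑ b : ε, ∑ t : δ, ∑ t' : ζ,
      (A j1 a * P j2 a t) * (Bb j1 b * Q j2 b t'))
    = ∑ j1 : α, ∑ a : γ, ∑ b : ε, (A j1 a * Bb j1 b) *
        (∑ j2 : β, ∑ t : δ, ∑ t' : ζ, P j2 a t * Q j2 b t') := by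
  refine Finset.sum_congr rfl fun j1 _ => ?_
  rw [Finset.sum_comm]
  refine Finset.sum_congr rfl fun a _ => ?_
  rw [Finset.sum_comm]
  refine Finset.sum_congr rfl fun b _ => ?_
  simp only [Finset.mul_sum]
  exact Finset.sum_congr rfl fun _ _ => Finset.sum_congr rfl fun _ _ =>
    Finset.sum_congr rfl fun _ _ => by ring

/-- Gram matrix of a right-orthogonalized MPO row matrix: let `B ∈ ℝ^{K×(J₁⋯J_d)}` be
given in MPO form with first tensor `B1t` (of size `1×K×J₁×R₂`, here `R 0 = R₂`) and
remaining tensors `T k` (of size `R_k×1×J_k×R_{k+1}`, with `R_{d+1}=1`).  If each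
reshaped tensor `G_k ∈ ℝ^{R_k×(J_k·R_{k+1})}` satisfies `G_k·G_kᵀ = I`, then
`B·Bᵀ = B₁·B₁ᵀ` where `B₁` is the `K×(J₁·R₂)` reshaping of the first tensor (so that an
economical SVD of `B` is obtained from the SVD of the small matrix `B₁`). -/
theorem mpo_svd_gram {d J₁ K : ℕ} (Jdim : Fin d → ℕ)
    (R : Fin (d + 1) → ℕ) (hRlast : R (Fin.last d) = 1)
    (B1t : Fin K → Fin J₁ → Fin (R 0) → ℝ)
    (T : (k : Fin d) → Fin (R k.castSucc) → Fin (Jdim k) → Fin (R k.succ) → ℝ)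
    (B : Matrix (Fin K) (Fin J₁ × ((k : Fin d) → Fin (Jdim k))) ℝ)
    (hB : ∀ κ j, B κ j = ∑ r : (k : Fin (d + 1)) → Fin (R k),
        B1t κ j.1 (r 0) * ∏ k : Fin d, T k (r k.castSucc) (j.2 k) (r k.succ))
    (hG : ∀ k : Fin d,
      (Matrix.of fun (r : Fin (R k.castSucc)) (p : Fin (Jdim k) × Fin (R k.succ)) =>
          T k r p.1 p.2) *
      (Matrix.of fun (r : Fin (R k.castSucc)) (p : Fin (Jdim k) × Fin (R k.succ)) =>
          T k r p.1 p.2)ᵀ = 1) :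
    B * Bᵀ =
      (Matrix.of fun (κ : Fin K) (p : Fin J₁ × Fin (R 0)) => B1t κ p.1 p.2) *
      (Matrix.of fun (κ : Fin K) (p : Fin J₁ × Fin (R 0)) => B1t κ p.1 p.2)ᵀ := by
  have hG' : ∀ (k : Fin d) (r r' : Fin (R k.castSucc)),
      (∑ j : Fin (Jdim k), ∑ s : Fin (R k.succ), T k r j s * T k r' j s)
        = if r = r' then 1 else 0 := by
    intro k r r'
    have := congrFun (congrFun (hG k) r) r'
    simpa [Matrix.mul_apply, Matrix.one_apply, Fintype.sum_prod_type] using this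
  have key := mpo_key d Jdim R hRlast T hG'
  ext κ κ'
  simp only [Matrix.mul_apply, Matrix.transpose_apply, Matrix.of_apply, hB]
  simp only [Fintype.sum_prod_type]
  simp only [sum_pi_succ, Fin.cons_zero, Fin.cons_succ]
  simp only [Finset.sum_mul_sum]
  rw [shuffle2 (fun (j1 : Fin J₁) (a : Fin (R 0)) => B1t κ j1 a)
      (fun (j2 : (k : Fin d) → Fin (Jdim k)) (a : Fin (R 0))
          (t : (k : Fin d) → Fin (R k.succ)) => ∏ k : Fin d,
        T k (Fin.cons (α := fun k => Fin (R k)) a t k.castSucc) (j2 k) (t k))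
      (fun (j1 : Fin J₁) (b : Fin (R 0)) => B1t κ' j1 b)
      (fun (j2 : (k : Fin d) → Fin (Jdim k)) (b : Fin (R 0))
          (t' : (k : Fin d) → Fin (R k.succ)) => ∏ k : Fin d,
        T k (Fin.cons (α := fun k => Fin (R k)) b t' k.castSucc) (j2 k) (t' k))]
  conv_lhs => enter [2, j1, 2, a, 2, b]; rw [key a b]
  simp [mul_ite, Finset.sum_ite_eq, Finset.sum_ite_eq']
end
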